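/- arXiv:1111.3266 — 3 statements merged into one kernel-verified Lean document; each statement's English description precedes it below -/
import Mathlib

section
/- Let G be a connected graph with at least 2 vertices and with no vertices of degree 2. Then G has a spanning tree with at least (v(G)-2)/4 + 2 leaves, where v(G) is the number of vertices of G. -/
/-!
The Kleitman–West "dead leaves" argument. Grow a rooted tree inside `G`, calling a leaf dead if
all its neighbours are already in the tree and live otherwise, and track the potential
4·(dead leaves) + 3·(live leaves) − (vertices of the tree); for a spanning tree it is
4·(leaves) − n. Expanding a vertex (attaching all its outside neighbours to it) costs at most 3
and gains at least 2 per new vertex, so the potential never drops if one expands a vertex with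
at least two outside neighbours whenever there is one. Otherwise let the live leaf `x` have the
single outside neighbour `u` and expand `x`: either `u` becomes a dead leaf, or expanding `u`
as well gains enough, or `u` has exactly one outside neighbour, and then, having no degree 2,
it has a third neighbour in the tree, a live leaf that dies. The star at a vertex of degree at
least 4, or at the neighbour of a vertex of degree 1, starts with potential at least 6; a cubic
graph only gives 5, but then n is even, and so is 4·(leaves) − n.
-/

open SimpleGraph

/-- Degree of a vertex (works without decidability assumptions). -/
noncomputable def ndeg {V : Type*} (G : SimpleGraph V) (v : V) : ℕ :=
  Nat.card (G.neighborSet v)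

/-- Number of leaves (vertices of degree 1) of a graph. -/
noncomputable def numLeaves {V : Type*} (T : SimpleGraph V) : ℕ :=
  Nat.card {v : V | ndeg T v = 1}

/-- A spanning tree of `G` is a tree `T ≤ G` on the same vertex set. -/
def IsSpanningTreeOf {V : Type*} (T G : SimpleGraph V) : Prop :=
  T ≤ G ∧ T.IsTree

/-- `maxLeaves G` is `u(G)`, the maximum number of leaves over all spanning trees. -/
noncomputable def maxLeaves {V : Type*} (G : SimpleGraph V) : ℕ :=
  sSup {n : ℕ | ∃ T : SimpleGraph V, IsSpanningTreeOf T G ∧ numLeaves T = n}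

namespace SimpleGraph

variable {V : Type*} {G : SimpleGraph V}

lemma ndeg_eq_degree (v : V) [Fintype (G.neighborSet v)] : ndeg G v = G.degree v :=
  Nat.card_eq_fintype_card.trans (G.card_neighborSet_eq_degree v)

lemma Connected.exists_adj_mem_notMem (hconn : G.Connected) {s : Set V} {a b : V} (ha : a ∈ s)
    (hb : b ∉ s) : ∃ x ∈ s, ∃ y ∉ s, G.Adj x y := by
  obtain ⟨d, -, hd, hd'⟩ := (hconn.preconnected a b).some.exists_boundary_dart s ha hb
  exact ⟨d.fst, hd, d.snd, hd', d.adj⟩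

lemma Connected.card_le_two_of_degree_eq_one [Fintype V] [DecidableRel G.Adj]
    (hconn : G.Connected) {x y : V} (hxy : G.Adj x y) (hx : G.degree x = 1)
    (hy : G.degree y = 1) : Fintype.card V ≤ 2 := by
  classical
  by_contra! hn
  obtain ⟨b, -, hb⟩ := Finset.exists_mem_notMem_of_card_lt_card (s := {x, y}) (t := .univ)
    (by rw [Finset.card_univ]; exact Finset.card_le_two.trans_lt hn)
  obtain ⟨z, hz, w, hw, hzw⟩ :=
    hconn.exists_adj_mem_notMem (s := {x, y}) (Set.mem_insert x _) (by simpa using hb)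
  rcases hz with rfl | rfl
  · exact hw (.inr ((degree_eq_one_iff_existsUnique_adj.mp hx).unique hzw hxy))
  · exact hw (.inl ((degree_eq_one_iff_existsUnique_adj.mp hy).unique hzw hxy.symm))

lemma IsTree.two_le_numLeaves [Finite V] [Nontrivial V] (hG : G.IsTree) : 2 ≤ numLeaves G := by
  classical
  have := Fintype.ofFinite V
  obtain ⟨u, v, huv, hu, hv⟩ := hG.exists_ne_and_degree_eq_one
  rw [numLeaves, Nat.card_coe_set_eq, ← Set.ncard_pair huv]
  refine Set.ncard_le_ncard ?_
  rintro w (rfl | rfl) <;> simpa [ndeg_eq_degree]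

end SimpleGraph

namespace KleitmanWest

open Finset

variable {V : Type*} [Fintype V] [DecidableEq V]

structure PartialTree (G : SimpleGraph V) [DecidableRel G.Adj] where
  verts : Finset V
  root : V
  parent : V → V
  rank : V → ℕ
  root_mem : root ∈ verts
  adj_parent : ∀ v ∈ verts, v ≠ root → G.Adj v (parent v)
  parent_mem : ∀ v ∈ verts, v ≠ root → parent v ∈ verts
  rank_parent_lt : ∀ v ∈ verts, v ≠ root → rank (parent v) < rank v
  leaf_of_outside_nonempty : ∀ v ∈ verts, (G.neighborFinset v \ verts).Nonempty →
    v ≠ root ∧ ∀ u ∈ verts, u ≠ root → parent u ≠ v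

namespace PartialTree

variable {G : SimpleGraph V} [DecidableRel G.Adj] (P : PartialTree G)

def outside (v : V) : Finset V := G.neighborFinset v \ P.verts

def IsLeaf (v : V) : Prop :=
  v ∈ P.verts ∧ v ≠ P.root ∧ ∀ u ∈ P.verts, u ≠ P.root → P.parent u ≠ v

instance : DecidablePred P.IsLeaf := fun _ => by unfold IsLeaf; infer_instance

def weight (v : V) : ℤ := if P.IsLeaf v then (if P.outside v = ∅ then 4 else 3) else 0

def potential : ℤ := ∑ v ∈ P.verts, P.weight v - #P.verts

variable {P}

lemma mem_outside {v u : V} : u ∈ P.outside v ↔ G.Adj v u ∧ u ∉ P.verts := by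
  rw [outside, mem_sdiff, mem_neighborFinset]

lemma isLeaf_of_outside_nonempty {v : V} (hv : v ∈ P.verts) (h : (P.outside v).Nonempty) :
    P.IsLeaf v :=
  ⟨hv, P.leaf_of_outside_nonempty v hv h⟩

lemma weight_nonneg (v : V) : 0 ≤ P.weight v := by
  unfold weight; split_ifs <;> norm_num

lemma three_le_weight {v : V} (h : P.IsLeaf v) : 3 ≤ P.weight v := by
  unfold weight; split_ifs <;> norm_num

lemma weight_eq_four {v : V} (h : P.IsLeaf v) (h' : P.outside v = ∅) : P.weight v = 4 := by
  rw [weight, if_pos h, if_pos h']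

lemma weight_eq_three {v : V} (hv : v ∈ P.verts) (h : (P.outside v).Nonempty) :
    P.weight v = 3 := by
  rw [weight, if_pos (isLeaf_of_outside_nonempty hv h), if_neg h.ne_empty]

lemma exists_outside_nonempty (hconn : G.Connected) (P : PartialTree G) (hP : P.verts ≠ univ) :
    ∃ x ∈ P.verts, (P.outside x).Nonempty := by
  obtain ⟨b, hb⟩ := not_forall.mp fun h => hP (eq_univ_iff_forall.mpr h)
  obtain ⟨x, hx, y, hy, hxy⟩ :=
    hconn.exists_adj_mem_notMem (s := ↑P.verts) (mem_coe.mpr P.root_mem) (mt mem_coe.mp hb)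
  exact ⟨x, hx, y, mem_outside.mpr ⟨hxy, hy⟩⟩

lemma exists_adj_of_outside_eq_singleton (hdeg : ∀ v, G.degree v ≠ 2) {x u : V}
    (hx : x ∈ P.verts) (hu : P.outside x = {u}) (hu1 : #(P.outside u) = 1) :
    ∃ v ∈ P.verts, v ≠ x ∧ G.Adj v u := by
  by_contra! h
  obtain ⟨u', hu'⟩ := card_eq_one.mp hu1
  have hxu : G.Adj x u := (mem_outside.mp (hu ▸ mem_singleton_self u)).1
  have hu'S : u' ∉ P.verts := (mem_outside.mp (hu' ▸ mem_singleton_self u')).2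
  have hN : G.neighborFinset u = {x, u'} := by
    ext w
    have : w = u' ↔ G.Adj u w ∧ w ∉ P.verts := by rw [← mem_singleton, ← hu', mem_outside]
    rw [mem_neighborFinset, mem_insert, mem_singleton, this]
    constructor
    · intro hw
      by_cases hwS : w ∈ P.verts
      · exact .inl (by_contra fun hwx => h w hwS hwx hw.symm)
      · exact .inr ⟨hw, hwS⟩
    · rintro (rfl | hw)
      exacts [hxu.symm, hw.1]
  apply hdeg u
  rw [← card_neighborFinset_eq_degree, hN, card_pair fun h : x = u' => hu'S (h ▸ hx)]

def expand (P : PartialTree G) (x : V) (hx : x ∈ P.verts) : PartialTree G where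
  verts := P.verts ∪ P.outside x
  root := P.root
  parent v := if v ∈ P.outside x then x else P.parent v
  rank v := if v ∈ P.outside x then P.rank x + 1 else P.rank v
  root_mem := mem_union_left _ P.root_mem
  adj_parent v hv hvr := by
    by_cases ho : v ∈ P.outside x
    · simpa [ho] using (mem_outside.mp ho).1.symm
    · simpa [ho] using P.adj_parent v ((mem_union.mp hv).resolve_right ho) hvr
  parent_mem v hv hvr := by
    by_cases ho : v ∈ P.outside x
    · simpa [ho] using mem_union_left _ hx
    · simpa [ho] using mem_union_left _
        (P.parent_mem v ((mem_union.mp hv).resolve_right ho) hvr)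
  rank_parent_lt v hv hvr := by
    have hxo : x ∉ P.outside x := fun h => (mem_outside.mp h).2 hx
    by_cases ho : v ∈ P.outside x
    · simp [ho, hxo]
    · have hv' := (mem_union.mp hv).resolve_right ho
      have hpo : P.parent v ∉ P.outside x := fun h =>
        (mem_outside.mp h).2 (P.parent_mem v hv' hvr)
      simpa [ho, hpo] using P.rank_parent_lt v hv' hvr
  leaf_of_outside_nonempty v hv hlive := by
    have hsub : G.neighborFinset v \ (P.verts ∪ P.outside x) ⊆ P.outside v := by
      intro u hu
      simp only [mem_sdiff, mem_union, not_or] at hu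
      exact mem_sdiff.mpr ⟨hu.1, hu.2.1⟩
    have hvx : v ≠ x := by
      rintro rfl
      obtain ⟨u, hu⟩ := hlive
      simp only [mem_sdiff, mem_union, not_or] at hu
      exact hu.2.2 (mem_sdiff.mpr ⟨hu.1, hu.2.1⟩)
    rcases mem_union.mp hv with hv | hv
    · obtain ⟨hvr, hch⟩ := P.leaf_of_outside_nonempty v hv (hlive.mono hsub)
      refine ⟨hvr, fun u hu hur => ?_⟩
      by_cases ho : u ∈ P.outside x
      · simpa [ho] using hvx.symm
      · simpa [ho] using hch u ((mem_union.mp hu).resolve_right ho) hur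
    · have hvS := (mem_outside.mp hv).2
      refine ⟨fun h => hvS (h ▸ P.root_mem), fun u hu hur => ?_⟩
      by_cases ho : u ∈ P.outside x
      · simpa [ho] using fun h : x = v => hvS (h ▸ hx)
      · simpa [ho] using fun h : P.parent u = v => hvS
          (h ▸ P.parent_mem u ((mem_union.mp hu).resolve_right ho) hur)

variable {x : V} (hx : x ∈ P.verts)

lemma verts_expand : (P.expand x hx).verts = P.verts ∪ P.outside x := rfl

lemma verts_ssubset_expand (hne : (P.outside x).Nonempty) : P.verts ⊂ (P.expand x hx).verts := by
  obtain ⟨u, hu⟩ := hne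
  exact (ssubset_iff_of_subset subset_union_left).mpr
    ⟨u, mem_union_right _ hu, (mem_outside.mp hu).2⟩

lemma outside_expand (v : V) : (P.expand x hx).outside v = P.outside v \ P.outside x := by
  ext u
  simp only [outside, verts_expand, mem_sdiff, mem_union]
  tauto

lemma isLeaf_expand {v : V} (hv : P.IsLeaf v) (hvx : v ≠ x) : (P.expand x hx).IsLeaf v := by
  refine ⟨mem_union_left _ hv.1, hv.2.1, fun u hu hur => ?_⟩
  by_cases ho : u ∈ P.outside x
  · simpa [expand, ho] using hvx.symm
  · simpa [expand, ho] using hv.2.2 u ((mem_union.mp hu).resolve_right ho) hur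

lemma isLeaf_expand_of_mem_outside {u : V} (hu : u ∈ P.outside x) :
    (P.expand x hx).IsLeaf u := by
  have huS := (mem_outside.mp hu).2
  refine ⟨mem_union_right _ hu, fun h => huS (h ▸ P.root_mem), fun y hy hyr => ?_⟩
  by_cases ho : y ∈ P.outside x
  · simpa [expand, ho] using fun h : x = u => huS (h ▸ hx)
  · simpa [expand, ho] using fun h : P.parent y = u => huS
      (h ▸ P.parent_mem y ((mem_union.mp hy).resolve_right ho) hyr)

lemma weight_expand_self (hne : (P.outside x).Nonempty) : (P.expand x hx).weight x = 0 := by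
  obtain ⟨u, hu⟩ := hne
  have hnl : ¬(P.expand x hx).IsLeaf x := fun h =>
    h.2.2 u (mem_union_right _ hu) (fun hr => (mem_outside.mp hu).2 (hr ▸ P.root_mem))
      (by simp [expand, hu])
  rw [weight, if_neg hnl]

lemma weight_le_weight_expand {v : V} (hvx : v ≠ x) :
    P.weight v ≤ (P.expand x hx).weight v := by
  by_cases hv : P.IsLeaf v
  · have hv' := isLeaf_expand hx hv hvx
    by_cases hd : P.outside v = ∅
    · have hd' : (P.expand x hx).outside v = ∅ := by rw [outside_expand, hd, empty_sdiff]
      rw [weight_eq_four hv hd, weight_eq_four hv' hd']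
    · rw [weight, if_pos hv, if_neg hd]
      exact three_le_weight hv'
  · rw [weight, if_neg hv]
    exact weight_nonneg v

lemma potential_expand : (P.expand x hx).potential = P.potential
    + ∑ v ∈ P.verts, ((P.expand x hx).weight v - P.weight v)
    + ∑ u ∈ P.outside x, ((P.expand x hx).weight u - 1) := by
  have hdisj : Disjoint P.verts (P.outside x) := disjoint_sdiff
  simp only [potential, verts_expand, sum_union hdisj, card_union_of_disjoint hdisj,
    sum_sub_distrib, sum_const, nsmul_eq_mul, mul_one]
  push_cast
  ring

lemma sum_weight_gain_ge (hne : (P.outside x).Nonempty) {s : Finset V}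
    (hs : s ⊆ P.verts.erase x) :
    ∑ v ∈ s, ((P.expand x hx).weight v - P.weight v) - 3
      ≤ ∑ v ∈ P.verts, ((P.expand x hx).weight v - P.weight v) := by
  have hgain : ∀ v ∈ P.verts.erase x, 0 ≤ (P.expand x hx).weight v - P.weight v :=
    fun v hv => sub_nonneg.mpr (weight_le_weight_expand hx (ne_of_mem_erase hv))
  rw [← add_sum_erase _ _ hx, weight_expand_self hx hne, weight_eq_three hx hne]
  linarith [sum_le_sum_of_subset_of_nonneg hs fun v hv _ => hgain v hv]

lemma potential_expand_ge (hne : (P.outside x).Nonempty) :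
    P.potential + 2 * #(P.outside x) - 3 ≤ (P.expand x hx).potential := by
  have hnew : ∀ u ∈ P.outside x, 2 ≤ (P.expand x hx).weight u - 1 := fun u hu => by
    linarith [three_le_weight (isLeaf_expand_of_mem_outside hx hu)]
  have hsum := card_nsmul_le_sum _ _ _ hnew
  have hgain := sum_weight_gain_ge hx hne (empty_subset _)
  rw [nsmul_eq_mul] at hsum
  rw [sum_empty, zero_sub] at hgain
  rw [potential_expand]
  linarith

lemma potential_expand_of_outside_eq_singleton {u : V} (hu : P.outside x = {u})
    (s : Finset V) (hs : s ⊆ P.verts.erase x) :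
    P.potential + ((P.expand x hx).weight u - 4)
        + ∑ v ∈ s, ((P.expand x hx).weight v - P.weight v)
      ≤ (P.expand x hx).potential := by
  have := sum_weight_gain_ge hx (hu ▸ singleton_nonempty u) hs
  rw [potential_expand, hu, sum_singleton]
  linarith

def toGraph (P : PartialTree G) : SimpleGraph V :=
  SimpleGraph.fromRel fun u v => u ≠ P.root ∧ P.parent u = v

section Full

variable (hfull : P.verts = univ)
include hfull

lemma parent_ne {v : V} (hv : v ≠ P.root) : P.parent v ≠ v := fun h =>
  (P.rank_parent_lt v (hfull ▸ mem_univ v) hv).ne (congrArg P.rank h)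

lemma toGraph_le : P.toGraph ≤ G := by
  intro u v h
  rw [toGraph, fromRel_adj] at h
  rcases h.2 with ⟨hu, rfl⟩ | ⟨hv, rfl⟩
  exacts [P.adj_parent u (hfull ▸ mem_univ u) hu, (P.adj_parent v (hfull ▸ mem_univ v) hv).symm]

lemma toGraph_reachable_root (v : V) : P.toGraph.Reachable v P.root := by
  induction hn : P.rank v using Nat.strong_induction_on generalizing v with
  | _ n ih =>
  by_cases hv : v = P.root
  · rw [hv]
  have hadj : P.toGraph.Adj v (P.parent v) := by
    rw [toGraph, fromRel_adj]
    exact ⟨(parent_ne hfull hv).symm, .inl ⟨hv, rfl⟩⟩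
  exact hadj.reachable.trans
    (ih _ (hn ▸ P.rank_parent_lt v (hfull ▸ mem_univ v) hv) _ rfl)

lemma toGraph_connected : P.toGraph.Connected :=
  have : Nonempty V := ⟨P.root⟩
  ⟨fun u v => (toGraph_reachable_root hfull u).trans (toGraph_reachable_root hfull v).symm⟩

lemma card_edgeSet_toGraph : Nat.card P.toGraph.edgeSet + 1 = Nat.card V := by
  set f : {v // v ≠ P.root} → Sym2 V := fun v => s(v.1, P.parent v.1)
  have hrange : Set.range f = P.toGraph.edgeSet := by
    ext e
    induction e using Sym2.ind with
    | _ a b =>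
    simp only [Set.mem_range, Subtype.exists, mem_edgeSet, toGraph, fromRel_adj, f, Sym2.eq_iff]
    constructor
    · rintro ⟨v, hv, ⟨rfl, rfl⟩ | ⟨rfl, rfl⟩⟩
      exacts [⟨(parent_ne hfull hv).symm, .inl ⟨hv, rfl⟩⟩,
        ⟨parent_ne hfull hv, .inr ⟨hv, rfl⟩⟩]
    · rintro ⟨-, ⟨ha, rfl⟩ | ⟨hb, rfl⟩⟩
      exacts [⟨a, ha, .inl ⟨rfl, rfl⟩⟩, ⟨b, hb, .inr ⟨rfl, rfl⟩⟩]
  have hinj : Function.Injective f := by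
    rintro ⟨u, hu⟩ ⟨v, hv⟩ h
    rcases Sym2.eq_iff.mp h with ⟨huv, -⟩ | ⟨huv, hvu⟩
    · exact Subtype.ext huv
    · have h1 := P.rank_parent_lt u (hfull ▸ mem_univ u) hu
      have h2 := P.rank_parent_lt v (hfull ▸ mem_univ v) hv
      rw [hvu] at h1
      rw [← huv] at h2
      dsimp only at h1 h2
      omega
  rw [← hrange, Nat.card_range_of_injective hinj]
  simp [Nat.card_eq_fintype_card, Fintype.card_subtype_compl]
  have := Fintype.card_pos_iff.mpr ⟨P.root⟩
  omega

lemma isSpanningTreeOf_toGraph : IsSpanningTreeOf P.toGraph G :=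
  ⟨toGraph_le hfull, isTree_iff_connected_and_card.mpr
    ⟨toGraph_connected hfull, card_edgeSet_toGraph hfull⟩⟩

lemma ndeg_toGraph_of_isLeaf {v : V} (hv : P.IsLeaf v) : ndeg P.toGraph v = 1 := by
  have : P.toGraph.neighborSet v = {P.parent v} := by
    ext u
    simp only [mem_neighborSet, toGraph, fromRel_adj, Set.mem_singleton_iff]
    constructor
    · rintro ⟨-, ⟨-, rfl⟩ | ⟨hu, rfl⟩⟩
      exacts [rfl, (hv.2.2 u (hfull ▸ mem_univ u) hu rfl).elim]
    · rintro rfl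
      exact ⟨(parent_ne hfull hv.2.1).symm, .inl ⟨hv.2.1, rfl⟩⟩
  rw [ndeg, this, Nat.card_unique]

lemma card_isLeaf_le_numLeaves : #(univ.filter P.IsLeaf) ≤ numLeaves P.toGraph := by
  rw [numLeaves, Nat.card_coe_set_eq, ← Set.ncard_coe_finset]
  exact Set.ncard_le_ncard (fun v hv => ndeg_toGraph_of_isLeaf hfull (by simpa using hv))

lemma potential_of_full : P.potential = 4 * #(univ.filter P.IsLeaf) - Fintype.card V := by
  have hw : ∀ v, P.weight v = if P.IsLeaf v then 4 else 0 := fun v => by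
    simp [weight, outside, hfull]
  simp only [potential, hfull, hw, sum_ite, sum_const, nsmul_eq_mul, card_univ]
  ring

end Full

variable (G) in
def star (x : V) : PartialTree G where
  verts := insert x (G.neighborFinset x)
  root := x
  parent _ := x
  rank v := if v = x then 0 else 1
  root_mem := mem_insert_self _ _
  adj_parent v hv hvx :=
    ((mem_neighborFinset _ _ _).mp ((mem_insert.mp hv).resolve_left hvx)).symm
  parent_mem _ _ _ := mem_insert_self _ _
  rank_parent_lt v _ hvx := by simp [hvx]
  leaf_of_outside_nonempty v _ hlive := by
    have hvx : v ≠ x := by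
      rintro rfl
      obtain ⟨u, hu⟩ := hlive
      exact (mem_sdiff.mp hu).2 (mem_insert_of_mem (mem_sdiff.mp hu).1)
    exact ⟨hvx, fun _ _ _ => Ne.symm hvx⟩

lemma verts_star (x : V) : (star G x).verts = insert x (G.neighborFinset x) := rfl

lemma isLeaf_star {x a : V} (ha : a ∈ G.neighborFinset x) : (star G x).IsLeaf a := by
  have hax : a ≠ x := (G.ne_of_adj ((mem_neighborFinset _ _ _).mp ha)).symm
  exact ⟨mem_insert_of_mem ha, hax, fun _ _ _ => Ne.symm hax⟩

lemma weight_star_of_neighborFinset_eq {x y : V} (hy : G.neighborFinset y = {x}) :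
    (star G x).weight y = 4 :=
  weight_eq_four (isLeaf_star ((mem_neighborFinset _ _ _).mpr
      ((mem_neighborFinset _ _ _).mp (hy ▸ mem_singleton_self x)).symm))
    (by simp [outside, star, hy])

lemma potential_star_ge {x a : V} (ha : a ∈ G.neighborFinset x) :
    2 * G.degree x - 1 + ((star G x).weight a - 3) ≤ (star G x).potential := by
  have hx : x ∉ G.neighborFinset x := fun h => G.irrefl ((mem_neighborFinset _ _ _).mp h)
  have hroot : (star G x).weight x = 0 := by
    rw [weight, if_neg fun h => h.2.1 rfl]
  have hsum := single_le_sum (fun b hb => sub_nonneg.mpr (three_le_weight (isLeaf_star hb))) ha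
  rw [sum_sub_distrib, sum_const, card_neighborFinset_eq_degree, nsmul_eq_mul] at hsum
  rw [potential, verts_star, sum_insert hx, card_insert_of_notMem hx,
    card_neighborFinset_eq_degree, hroot]
  push_cast
  linarith

end PartialTree

open PartialTree

variable {G : SimpleGraph V} [DecidableRel G.Adj]

lemma exists_step_of_outside_eq_singleton (hdeg : ∀ v, G.degree v ≠ 2) {P : PartialTree G}
    (hsmall : ∀ v ∈ P.verts, #(P.outside v) ≤ 1) {x u : V} (hx : x ∈ P.verts)
    (hu : P.outside x = {u}) :
    ∃ Q : PartialTree G, P.verts ⊂ Q.verts ∧ P.potential ≤ Q.potential := by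
  set Q := P.expand x hx
  have hPQ : P.verts ⊂ Q.verts := verts_ssubset_expand hx (hu ▸ singleton_nonempty u)
  have huo : u ∈ P.outside x := hu ▸ mem_singleton_self u
  have huQ : Q.IsLeaf u := isLeaf_expand_of_mem_outside hx huo
  have key := potential_expand_of_outside_eq_singleton hx hu
  rcases (Q.outside u).eq_empty_or_nonempty with hdead | hlive
  · have := key ∅ (empty_subset _)
    rw [weight_eq_four huQ hdead, sum_empty] at this
    exact ⟨Q, hPQ, by linarith⟩
  have hw3 : Q.weight u = 3 := weight_eq_three huQ.1 hlive
  by_cases h2 : 2 ≤ #(Q.outside u)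
  · refine ⟨Q.expand u huQ.1, hPQ.trans (verts_ssubset_expand huQ.1 hlive), ?_⟩
    have := key ∅ (empty_subset _)
    rw [hw3, sum_empty] at this
    have : (2 : ℤ) ≤ #(Q.outside u) := by exact_mod_cast h2
    linarith [potential_expand_ge huQ.1 hlive]
  -- `u` has a unique outside neighbour, so by `hdeg` a second tree neighbour `v ≠ x`,
  -- which was a live leaf and dies in `Q`.
  have hQu : Q.outside u = P.outside u := by
    rw [outside_expand, hu, sdiff_singleton_eq_erase,
      erase_eq_of_notMem fun h => G.irrefl (mem_outside.mp h).1]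
  obtain ⟨v, hv, hvx, hvu⟩ := exists_adj_of_outside_eq_singleton hdeg hx hu
    (by have := card_pos.mpr hlive; rw [← hQu]; omega)
  have huv : u ∈ P.outside v := mem_outside.mpr ⟨hvu, (mem_outside.mp huo).2⟩
  have hvo : P.outside v = {u} := eq_singleton_iff_unique_mem.mpr
    ⟨huv, fun w hw => card_le_one.mp (hsmall v hv) w hw u huv⟩
  have hw : P.weight v = 3 := weight_eq_three hv (hvo ▸ singleton_nonempty u)
  have hw' : Q.weight v = 4 := weight_eq_four
    (isLeaf_expand hx (isLeaf_of_outside_nonempty hv (hvo ▸ singleton_nonempty u)) hvx)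
    (by rw [outside_expand, hvo, hu, sdiff_self, bot_eq_empty])
  have := key {v} (singleton_subset_iff.mpr (mem_erase.mpr ⟨hvx, hv⟩))
  rw [sum_singleton, hw, hw', hw3] at this
  exact ⟨Q, hPQ, by linarith⟩

theorem exists_step (hconn : G.Connected) (hdeg : ∀ v, G.degree v ≠ 2) (P : PartialTree G)
    (hP : P.verts ≠ univ) :
    ∃ Q : PartialTree G, P.verts ⊂ Q.verts ∧ P.potential ≤ Q.potential := by
  by_cases hbig : ∃ x ∈ P.verts, 2 ≤ #(P.outside x)
  · obtain ⟨x, hx, h2⟩ := hbig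
    have hne : (P.outside x).Nonempty := card_pos.mp (by omega)
    have : (2 : ℤ) ≤ #(P.outside x) := by exact_mod_cast h2
    exact ⟨P.expand x hx, verts_ssubset_expand hx hne, by linarith [potential_expand_ge hx hne]⟩
  have hsmall : ∀ v ∈ P.verts, #(P.outside v) ≤ 1 := fun v hv => by
    by_contra h
    exact hbig ⟨v, hv, by omega⟩
  obtain ⟨x, hx, hne⟩ := exists_outside_nonempty hconn P hP
  obtain ⟨u, hu⟩ := card_eq_one.mp (le_antisymm (hsmall x hx) (card_pos.mpr hne))
  exact exists_step_of_outside_eq_singleton hdeg hsmall hx hu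

theorem exists_full_potential_ge (hconn : G.Connected) (hdeg : ∀ v, G.degree v ≠ 2)
    (P : PartialTree G) :
    ∃ Q : PartialTree G, Q.verts = univ ∧ P.potential ≤ Q.potential := by
  by_cases hP : P.verts = univ
  · exact ⟨P, hP, le_rfl⟩
  obtain ⟨Q, hPQ, hle⟩ := exists_step hconn hdeg P hP
  obtain ⟨R, hR, hle'⟩ := exists_full_potential_ge hconn hdeg Q
  exact ⟨R, hR, hle.trans hle'⟩
termination_by Fintype.card V - #P.verts
decreasing_by
  have := card_lt_card hPQ
  have := card_le_univ Q.verts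
  omega


theorem exists_start (hconn : G.Connected) (hdeg : ∀ v, G.degree v ≠ 2)
    (hn : 3 ≤ Fintype.card V) :
    ∃ P : PartialTree G, 6 ≤ P.potential ∨ (5 ≤ P.potential ∧ Even (Fintype.card V)) := by
  have : Nontrivial V := Fintype.one_lt_card_iff_nontrivial.mp (by omega)
  have hpos : ∀ v, 0 < G.degree v := fun v => hconn.preconnected.degree_pos_of_nontrivial v
  have hnb : ∀ x, ∃ a, a ∈ G.neighborFinset x := fun x =>
    card_pos.mp ((card_neighborFinset_eq_degree G x).symm ▸ hpos x)
  by_cases h4 : ∃ x, 4 ≤ G.degree x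
  · obtain ⟨x, hx⟩ := h4
    obtain ⟨a, ha⟩ := hnb x
    have := potential_star_ge ha
    have := three_le_weight (isLeaf_star ha)
    have : (4 : ℤ) ≤ G.degree x := by exact_mod_cast hx
    exact ⟨star G x, .inl (by linarith)⟩
  by_cases h1 : ∃ y, G.degree y = 1
  · -- `y` is a dead leaf of the star at its neighbour `x`, which has degree 3
    obtain ⟨y, hy⟩ := h1
    obtain ⟨x, hyx⟩ := card_eq_one.mp ((card_neighborFinset_eq_degree G y).trans hy)
    have hyx' : G.Adj y x := (mem_neighborFinset _ _ _).mp (hyx ▸ mem_singleton_self x)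
    have := potential_star_ge ((mem_neighborFinset _ _ _).mpr hyx'.symm)
    rw [weight_star_of_neighborFinset_eq hyx] at this
    have hx1 : G.degree x ≠ 1 := fun h => by
      have := hconn.card_le_two_of_degree_eq_one hyx' hy h
      omega
    have : (3 : ℤ) ≤ G.degree x := by have := hdeg x; have := hpos x; omega
    exact ⟨star G x, .inl (by linarith)⟩
  push Not at h4 h1
  have h3 : ∀ v, G.degree v = 3 := fun v => by
    have := h4 v; have := h1 v; have := hdeg v; have := hpos v; omega
  obtain ⟨x⟩ := ‹Nontrivial V›.to_nonempty
  obtain ⟨a, ha⟩ := hnb x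
  have hstar := potential_star_ge ha
  have := three_le_weight (isLeaf_star ha)
  rw [h3] at hstar
  push_cast at hstar
  exact ⟨star G x, .inr ⟨by linarith,
    by simpa [h3, Nat.odd_iff] using G.even_card_odd_degree_vertices⟩⟩

end KleitmanWest

open KleitmanWest PartialTree

theorem stmt_1 {V : Type*} [Fintype V] (G : SimpleGraph V)
    (hconn : G.Connected) (h2 : 2 ≤ Fintype.card V)
    (hdeg : ∀ v : V, ndeg G v ≠ 2) :
    ∃ T : SimpleGraph V, IsSpanningTreeOf T G ∧
      ((Fintype.card V : ℝ) - 2) / 4 + 2 ≤ (numLeaves T : ℝ) := by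
  classical
  suffices h : ∃ T, IsSpanningTreeOf T G ∧ (Fintype.card V : ℤ) + 6 ≤ 4 * numLeaves T by
    obtain ⟨T, hT, hle⟩ := h
    refine ⟨T, hT, ?_⟩
    have : (Fintype.card V : ℝ) + 6 ≤ 4 * numLeaves T := by exact_mod_cast hle
    linarith
  rcases h2.eq_or_lt with hn | hn
  · have : Nontrivial V := Fintype.one_lt_card_iff_nontrivial.mp (by omega)
    obtain ⟨T, hTG, hT⟩ := hconn.exists_isTree_le
    have := hT.two_le_numLeaves
    exact ⟨T, ⟨hTG, hT⟩, by omega⟩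
  have hdeg' : ∀ v, G.degree v ≠ 2 := fun v => G.ndeg_eq_degree v ▸ hdeg v
  obtain ⟨P, hP⟩ := exists_start hconn hdeg' hn
  obtain ⟨Q, hQ, hPQ⟩ := exists_full_potential_ge hconn hdeg' P
  have hpot := potential_of_full hQ
  have hleaves := card_isLeaf_le_numLeaves hQ
  refine ⟨Q.toGraph, isSpanningTreeOf_toGraph hQ, ?_⟩
  rcases hP with h | ⟨h, k, hk⟩ <;> omega
end

section
/- Let G1 and G2 be vertex-disjoint connected graphs, each with at least 2 vertices, with pendant (degree-1) vertices x1 in G1 and x2 in G2 respectively. Let G be the graph obtained by identifying x1 and x2 into a single vertex. Then u(G) = u(G1) + u(G2) - 2, where u(H) denotes the maximum number of leaves in a spanning tree of H. -/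
open SimpleGraph

/-- The graph obtained by gluing `G1` and `G2` at the vertices `x1`, `x2`
(which are identified into the single vertex `Sum.inl x1`). -/
def glue {V1 V2 : Type*} (G1 : SimpleGraph V1) (G2 : SimpleGraph V2)
    (x1 : V1) (x2 : V2) : SimpleGraph (V1 ⊕ {v : V2 // v ≠ x2}) :=
  SimpleGraph.fromRel (fun a b =>
    match a, b with
    | Sum.inl u, Sum.inl v => G1.Adj u v
    | Sum.inl u, Sum.inr v => u = x1 ∧ G2.Adj x2 v.val
    | Sum.inr u, Sum.inr v => G2.Adj u.val v.val
    | Sum.inr _, Sum.inl _ => False)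

/-!
Spanning trees of the glued graph are exactly the gluings of spanning trees `t₁` of `G₁` and
`t₂` of `G₂`: connectivity passes both ways through the retractions onto the two sides, and the
tree condition then follows by counting, since a connected graph is a tree iff it has one edge
fewer than vertices, and both counts are additive up to the shared vertex. A pendant vertex is a
leaf of every spanning tree, so `x₁` and `x₂` are leaves of `t₁` and `t₂`; after gluing they
become one vertex of degree 2 while all other degrees are unchanged, so exactly two leaves are
lost. Optimising `t₁` and `t₂` independently gives the formula.
-/

namespace SimpleGraph

variable {V V' : Type*}

lemma ndeg_eq_ncard (G : SimpleGraph V) (v : V) : ndeg G v = (G.neighborSet v).ncard :=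
  Nat.card_coe_set_eq _

lemma Reachable.map_of_forall_adj {G : SimpleGraph V} {G' : SimpleGraph V'} (f : V → V')
    (hf : ∀ u v, G.Adj u v → G'.Reachable (f u) (f v)) {u v : V} (h : G.Reachable u v) :
    G'.Reachable (f u) (f v) := by
  rw [reachable_iff_reflTransGen] at h ⊢
  exact h.lift' f fun a b hab => (reachable_iff_reflTransGen _ _).mp (hf a b hab)

lemma ndeg_eq_one_of_le [Nontrivial V] {T G : SimpleGraph V} {x : V} (hle : T ≤ G)
    (hT : T.Connected) (hx : ndeg G x = 1) : ndeg T x = 1 := by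
  rw [ndeg_eq_ncard] at hx ⊢
  have hfin : (G.neighborSet x).Finite := Set.finite_of_ncard_ne_zero (by omega)
  have hsub : T.neighborSet x ⊆ G.neighborSet x := fun _ h => hle h
  have hpos : 0 < (T.neighborSet x).ncard :=
    (Set.ncard_pos (hfin.subset hsub)).mpr (hT.preconnected.exists_adj_of_nontrivial x)
  have := Set.ncard_le_ncard hsub hfin
  omega

lemma bddAbove_numLeaves [Finite V] (G : SimpleGraph V) :
    BddAbove {n | ∃ T, IsSpanningTreeOf T G ∧ numLeaves T = n} :=
  ⟨Nat.card V, by rintro _ ⟨T, -, rfl⟩; exact Finite.card_subtype_le _⟩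

lemma numLeaves_le_maxLeaves [Finite V] {T G : SimpleGraph V} (hT : IsSpanningTreeOf T G) :
    numLeaves T ≤ maxLeaves G :=
  le_csSup (bddAbove_numLeaves G) ⟨T, hT, rfl⟩

lemma Connected.exists_numLeaves_eq_maxLeaves [Finite V] {G : SimpleGraph V} (hG : G.Connected) :
    ∃ T, IsSpanningTreeOf T G ∧ numLeaves T = maxLeaves G := by
  obtain ⟨T, hle, hT⟩ := hG.exists_isTree_le
  exact Nat.sSup_mem (s := {n | ∃ T, IsSpanningTreeOf T G ∧ numLeaves T = n})
    ⟨_, T, ⟨hle, hT⟩, rfl⟩ (bddAbove_numLeaves G)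

lemma eq_sup_map_comap_of_le {W : Type*} {V₁ V₂ : Type*} {f₁ : V₁ ↪ W} {f₂ : V₂ ↪ W}
    {G₁ : SimpleGraph V₁} {G₂ : SimpleGraph V₂} {T : SimpleGraph W}
    (hT : T ≤ G₁.map f₁ ⊔ G₂.map f₂) : T = (T.comap f₁).map f₁ ⊔ (T.comap f₂).map f₂ := by
  refine le_antisymm (fun u v huv => ?_) (sup_le (map_comap_le f₁ T) (map_comap_le f₂ T))
  rcases hT huv with ⟨-, a, b, -, rfl, rfl⟩ | ⟨-, a, b, -, rfl, rfl⟩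
  · exact Or.inl (map_adj_apply.mpr huv)
  · exact Or.inr (map_adj_apply.mpr huv)

end SimpleGraph

/-- `G₁.map f₁ ⊔ G₂.map f₂` is the graph obtained from `G₁` and `G₂` by identifying `x₁` with
`x₂` (their one-point union). -/
structure IsWedge {V₁ V₂ W : Type*} (f₁ : V₁ ↪ W) (f₂ : V₂ ↪ W) (x₁ : V₁) (x₂ : V₂) : Prop where
  base : f₁ x₁ = f₂ x₂
  cover : ∀ w, w ∈ Set.range f₁ ∨ w ∈ Set.range f₂
  left_eq : ∀ {a b}, f₁ a = f₂ b → a = x₁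

namespace IsWedge

variable {V₁ V₂ W : Type*} {f₁ : V₁ ↪ W} {f₂ : V₂ ↪ W} {x₁ : V₁} {x₂ : V₂}
  {G₁ t₁ : SimpleGraph V₁} {G₂ t₂ : SimpleGraph V₂}

lemma right_eq (h : IsWedge f₁ f₂ x₁ x₂) {a : V₁} {b : V₂} (hab : f₁ a = f₂ b) : b = x₂ :=
  f₂.injective (by rw [← hab, h.left_eq hab, h.base])

lemma symm (h : IsWedge f₁ f₂ x₁ x₂) : IsWedge f₂ f₁ x₂ x₁ :=
  ⟨h.base.symm, fun w => (h.cover w).symm, fun hba => h.right_eq hba.symm⟩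

lemma finite [Finite V₁] [Finite V₂] (h : IsWedge f₁ f₂ x₁ x₂) : Finite W := by
  refine Set.finite_univ_iff.mp (((Set.finite_range f₁).union (Set.finite_range f₂)).subset ?_)
  exact fun w _ => h.cover w

lemma card_add_one [Finite V₁] [Finite V₂] (h : IsWedge f₁ f₂ x₁ x₂) :
    Nat.card W + 1 = Nat.card V₁ + Nat.card V₂ := by
  have := h.finite
  have hunion : Set.range f₁ ∪ Set.range f₂ = Set.univ :=
    Set.eq_univ_of_forall h.cover
  have hinter : Set.range f₁ ∩ Set.range f₂ = {f₁ x₁} := by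
    refine Set.eq_singleton_iff_unique_mem.mpr ⟨⟨⟨x₁, rfl⟩, ⟨x₂, h.base.symm⟩⟩, ?_⟩
    rintro _ ⟨⟨a, rfl⟩, ⟨b, hba⟩⟩
    rw [h.left_eq hba.symm]
  have := Set.ncard_union_add_ncard_inter (Set.range f₁) (Set.range f₂)
  rwa [hunion, hinter, Set.ncard_univ, Set.ncard_singleton,
    Set.ncard_range_of_injective f₁.injective, Set.ncard_range_of_injective f₂.injective] at this

lemma disjoint_map (h : IsWedge f₁ f₂ x₁ x₂) (t₁ : SimpleGraph V₁) (t₂ : SimpleGraph V₂) :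
    Disjoint (t₁.map f₁) (t₂.map f₂) := by
  refine disjoint_iff_inf_le.mpr fun u v huv => ?_
  obtain ⟨⟨hne, a, b, -, rfl, rfl⟩, ⟨-, c, d, -, hca, hdb⟩⟩ := huv
  rw [h.left_eq hca.symm, h.left_eq hdb.symm] at hne
  exact hne rfl

lemma card_edgeSet_sup_map [Finite V₁] [Finite V₂] (h : IsWedge f₁ f₂ x₁ x₂) :
    Nat.card (t₁.map f₁ ⊔ t₂.map f₂).edgeSet = Nat.card t₁.edgeSet + Nat.card t₂.edgeSet := by
  have := h.finite
  simp only [Nat.card_coe_set_eq]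
  rw [edgeSet_sup, Set.ncard_union_eq (disjoint_edgeSet.mpr (h.disjoint_map t₁ t₂)),
    edgeSet_map, edgeSet_map, Set.ncard_image_of_injective _ f₁.sym2Map.injective,
    Set.ncard_image_of_injective _ f₂.sym2Map.injective]

lemma connected_sup_map (h : IsWedge f₁ f₂ x₁ x₂) (ht₁ : t₁.Connected) (ht₂ : t₂.Connected) :
    (t₁.map f₁ ⊔ t₂.map f₂).Connected := by
  refine (connected_iff_exists_forall_reachable _).mpr ⟨f₁ x₁, fun w => ?_⟩
  rcases h.cover w with ⟨a, rfl⟩ | ⟨b, rfl⟩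
  · exact ((ht₁.preconnected x₁ a).map (Embedding.map f₁ t₁).toHom).mono le_sup_left
  · rw [h.base]
    exact ((ht₂.preconnected x₂ b).map (Embedding.map f₂ t₂).toHom).mono le_sup_right

lemma connected_of_connected_sup_map (h : IsWedge f₁ f₂ x₁ x₂)
    (hc : (t₁.map f₁ ⊔ t₂.map f₂).Connected) : t₁.Connected := by
  set r : W → V₁ := Function.extend f₁ id fun _ => x₁
  have hr₁ (a : V₁) : r (f₁ a) = a := f₁.injective.extend_apply _ _ a
  have hr₂ (b : V₂) : r (f₂ b) = x₁ := by
    by_cases hb : ∃ a, f₁ a = f₂ b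
    · obtain ⟨a, hab⟩ := hb
      rw [← hab, hr₁, h.left_eq hab]
    · exact Function.extend_apply' _ _ _ hb
  have hr : ∀ u v, (t₁.map f₁ ⊔ t₂.map f₂).Adj u v → t₁.Reachable (r u) (r v) := by
    rintro _ _ (⟨-, a, b, hab, rfl, rfl⟩ | ⟨-, a, b, -, rfl, rfl⟩)
    · rw [hr₁, hr₁]
      exact hab.reachable
    · rw [hr₂, hr₂]
  refine (connected_iff_exists_forall_reachable _).mpr ⟨x₁, fun a => ?_⟩
  simpa only [hr₁] using (hc.preconnected (f₁ x₁) (f₁ a)).map_of_forall_adj r hr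

lemma connected_sup_map_iff (h : IsWedge f₁ f₂ x₁ x₂) :
    (t₁.map f₁ ⊔ t₂.map f₂).Connected ↔ t₁.Connected ∧ t₂.Connected := by
  refine ⟨fun hc => ⟨h.connected_of_connected_sup_map hc, ?_⟩,
    fun ⟨ht₁, ht₂⟩ => h.connected_sup_map ht₁ ht₂⟩
  rw [sup_comm] at hc
  exact h.symm.connected_of_connected_sup_map hc

lemma isTree_sup_map_iff [Finite V₁] [Finite V₂] (h : IsWedge f₁ f₂ x₁ x₂) :
    (t₁.map f₁ ⊔ t₂.map f₂).IsTree ↔ t₁.IsTree ∧ t₂.IsTree := by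
  have := h.finite
  have hcard := h.card_add_one
  simp only [isTree_iff_connected_and_card, h.connected_sup_map_iff, h.card_edgeSet_sup_map]
  constructor
  · rintro ⟨⟨hc₁, hc₂⟩, hedges⟩
    have := hc₁.card_vert_le_card_edgeSet_add_one
    have := hc₂.card_vert_le_card_edgeSet_add_one
    exact ⟨⟨hc₁, by omega⟩, ⟨hc₂, by omega⟩⟩
  · rintro ⟨⟨hc₁, he₁⟩, ⟨hc₂, he₂⟩⟩
    exact ⟨⟨hc₁, hc₂⟩, by omega⟩

lemma ndeg_sup_map_of_ne (h : IsWedge f₁ f₂ x₁ x₂) {a : V₁} (ha : a ≠ x₁) :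
    ndeg (t₁.map f₁ ⊔ t₂.map f₂) (f₁ a) = ndeg t₁ a := by
  have hempty : (t₂.map f₂).neighborSet (f₁ a) = ∅ :=
    Set.eq_empty_of_forall_notMem fun _ ⟨_, b, _, _, hb, _⟩ => ha (h.left_eq hb.symm)
  rw [ndeg, neighborSet_sup, neighborSet_map, hempty, Set.union_empty, ndeg,
    Nat.card_image_of_injective f₁.injective]

lemma ndeg_sup_map_base [Finite V₁] [Finite V₂] (h : IsWedge f₁ f₂ x₁ x₂) :
    ndeg (t₁.map f₁ ⊔ t₂.map f₂) (f₁ x₁) = ndeg t₁ x₁ + ndeg t₂ x₂ := by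
  have := h.finite
  have hdisj := disjoint_neighborSet.mpr (h.disjoint_map t₁ t₂) (f₁ x₁)
  rw [ndeg_eq_ncard, neighborSet_sup, Set.ncard_union_eq hdisj, neighborSet_map, h.base,
    neighborSet_map, Set.ncard_image_of_injective _ f₁.injective,
    Set.ncard_image_of_injective _ f₂.injective, ndeg_eq_ncard, ndeg_eq_ncard]

lemma ndeg_sup_map_eq_one_iff [Finite V₁] [Finite V₂] (h : IsWedge f₁ f₂ x₁ x₂)
    (h₁ : ndeg t₁ x₁ = 1) (h₂ : ndeg t₂ x₂ = 1) (a : V₁) :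
    ndeg (t₁.map f₁ ⊔ t₂.map f₂) (f₁ a) = 1 ↔ a ∈ {v | ndeg t₁ v = 1} \ {x₁} := by
  rcases eq_or_ne a x₁ with rfl | ha
  · simp [h.ndeg_sup_map_base, h₁, h₂]
  · simp [h.ndeg_sup_map_of_ne ha, ha]

lemma leaves_sup_map [Finite V₁] [Finite V₂] (h : IsWedge f₁ f₂ x₁ x₂)
    (h₁ : ndeg t₁ x₁ = 1) (h₂ : ndeg t₂ x₂ = 1) :
    {w | ndeg (t₁.map f₁ ⊔ t₂.map f₂) w = 1} =
      f₁ '' ({v | ndeg t₁ v = 1} \ {x₁}) ∪ f₂ '' ({v | ndeg t₂ v = 1} \ {x₂}) := by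
  ext w
  rcases h.cover w with ⟨a, rfl⟩ | ⟨b, rfl⟩
  · have hnot : f₁ a ∉ f₂ '' ({v | ndeg t₂ v = 1} \ {x₂}) :=
      fun ⟨_, hb, hba⟩ => hb.2 (h.right_eq hba.symm)
    rw [Set.mem_ofPred_eq, h.ndeg_sup_map_eq_one_iff h₁ h₂, Set.mem_union,
      f₁.injective.mem_set_image]
    exact (or_iff_left hnot).symm
  · have hnot : f₂ b ∉ f₁ '' ({v | ndeg t₁ v = 1} \ {x₁}) :=
      fun ⟨_, ha, hab⟩ => ha.2 (h.left_eq hab)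
    rw [Set.mem_ofPred_eq, sup_comm, h.symm.ndeg_sup_map_eq_one_iff h₂ h₁, Set.mem_union,
      f₂.injective.mem_set_image]
    exact (or_iff_right hnot).symm

lemma numLeaves_sup_map [Finite V₁] [Finite V₂] (h : IsWedge f₁ f₂ x₁ x₂)
    (h₁ : ndeg t₁ x₁ = 1) (h₂ : ndeg t₂ x₂ = 1) :
    numLeaves (t₁.map f₁ ⊔ t₂.map f₂) + 2 = numLeaves t₁ + numLeaves t₂ := by
  have := h.finite
  have hdisj : Disjoint (f₁ '' ({v | ndeg t₁ v = 1} \ {x₁}))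
      (f₂ '' ({v | ndeg t₂ v = 1} \ {x₂})) :=
    Set.disjoint_left.mpr fun _ ⟨_, ha, hw⟩ ⟨_, _, hb⟩ => ha.2 (h.left_eq (hw.trans hb.symm))
  simp only [numLeaves, Nat.card_coe_set_eq]
  rw [h.leaves_sup_map h₁ h₂, Set.ncard_union_eq hdisj,
    Set.ncard_image_of_injective _ f₁.injective, Set.ncard_image_of_injective _ f₂.injective,
    ← Set.ncard_sdiff_singleton_add_one (show x₁ ∈ {v | ndeg t₁ v = 1} from h₁),
    ← Set.ncard_sdiff_singleton_add_one (show x₂ ∈ {v | ndeg t₂ v = 1} from h₂)]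
  ring

lemma comap_sup_map (h : IsWedge f₁ f₂ x₁ x₂) : (t₁.map f₁ ⊔ t₂.map f₂).comap f₁ = t₁ := by
  ext a b
  refine ⟨fun hab => hab.elim map_adj_apply.mp fun hab' => ?_,
    fun hab => Or.inl (map_adj_apply.mpr hab)⟩
  obtain ⟨hne, c, d, -, hca, hdb⟩ := hab'
  rw [← hca, ← hdb, h.right_eq hca.symm, h.right_eq hdb.symm] at hne
  exact absurd rfl hne

lemma isSpanningTreeOf_sup_map [Finite V₁] [Finite V₂] (h : IsWedge f₁ f₂ x₁ x₂)
    (ht₁ : IsSpanningTreeOf t₁ G₁) (ht₂ : IsSpanningTreeOf t₂ G₂) :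
    IsSpanningTreeOf (t₁.map f₁ ⊔ t₂.map f₂) (G₁.map f₁ ⊔ G₂.map f₂) :=
  ⟨sup_le_sup (map_monotone f₁ ht₁.1) (map_monotone f₂ ht₂.1),
    h.isTree_sup_map_iff.mpr ⟨ht₁.2, ht₂.2⟩⟩

lemma isSpanningTreeOf_comap [Finite V₁] [Finite V₂] (h : IsWedge f₁ f₂ x₁ x₂)
    {T : SimpleGraph W} (hT : IsSpanningTreeOf T (G₁.map f₁ ⊔ G₂.map f₂)) :
    IsSpanningTreeOf (T.comap f₁) G₁ ∧ IsSpanningTreeOf (T.comap f₂) G₂ := by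
  obtain ⟨hle, htree⟩ := hT
  rw [eq_sup_map_comap_of_le hle, h.isTree_sup_map_iff] at htree
  have hle₁ := comap_monotone f₁ hle
  have hle₂ := comap_monotone f₂ hle
  rw [h.comap_sup_map] at hle₁
  rw [sup_comm, h.symm.comap_sup_map] at hle₂
  exact ⟨⟨hle₁, htree.1⟩, ⟨hle₂, htree.2⟩⟩

theorem maxLeaves_sup_map_add_two [Finite V₁] [Finite V₂] [Nontrivial V₁] [Nontrivial V₂]
    (h : IsWedge f₁ f₂ x₁ x₂) (hG₁ : G₁.Connected) (hG₂ : G₂.Connected)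
    (hx₁ : ndeg G₁ x₁ = 1) (hx₂ : ndeg G₂ x₂ = 1) :
    maxLeaves (G₁.map f₁ ⊔ G₂.map f₂) + 2 = maxLeaves G₁ + maxLeaves G₂ := by
  have := h.finite
  have hleaves {t₁ t₂} (ht₁ : IsSpanningTreeOf t₁ G₁) (ht₂ : IsSpanningTreeOf t₂ G₂) :
      numLeaves (t₁.map f₁ ⊔ t₂.map f₂) + 2 = numLeaves t₁ + numLeaves t₂ :=
    h.numLeaves_sup_map (ndeg_eq_one_of_le ht₁.1 ht₁.2.connected hx₁)
      (ndeg_eq_one_of_le ht₂.1 ht₂.2.connected hx₂)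
  apply le_antisymm
  · obtain ⟨T, hT, hTmax⟩ := (h.connected_sup_map hG₁ hG₂).exists_numLeaves_eq_maxLeaves
    obtain ⟨hT₁, hT₂⟩ := h.isSpanningTreeOf_comap hT
    rw [← hTmax, eq_sup_map_comap_of_le hT.1, hleaves hT₁ hT₂]
    exact add_le_add (numLeaves_le_maxLeaves hT₁) (numLeaves_le_maxLeaves hT₂)
  · obtain ⟨t₁, ht₁, ht₁max⟩ := hG₁.exists_numLeaves_eq_maxLeaves
    obtain ⟨t₂, ht₂, ht₂max⟩ := hG₂.exists_numLeaves_eq_maxLeaves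
    rw [← ht₁max, ← ht₂max, ← hleaves ht₁ ht₂]
    exact add_le_add_left (numLeaves_le_maxLeaves (h.isSpanningTreeOf_sup_map ht₁ ht₂)) 2

end IsWedge

open Classical in
noncomputable def glueRight {V₁ V₂ : Type*} (x₁ : V₁) (x₂ : V₂) :
    V₂ ↪ V₁ ⊕ {v : V₂ // v ≠ x₂} where
  toFun v := if hv : v = x₂ then Sum.inl x₁ else Sum.inr ⟨v, hv⟩
  inj' a b hab := by
    by_cases ha : a = x₂ <;> by_cases hb : b = x₂ <;> simp_all

section Glue

variable {V₁ V₂ : Type*} {x₁ : V₁} {x₂ : V₂}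

lemma glueRight_self : glueRight x₁ x₂ x₂ = Sum.inl x₁ := dif_pos rfl

lemma glueRight_of_ne {v : V₂} (hv : v ≠ x₂) : glueRight x₁ x₂ v = Sum.inr ⟨v, hv⟩ := dif_neg hv

lemma glueRight_eq_inl_iff {v : V₂} {a : V₁} :
    glueRight x₁ x₂ v = Sum.inl a ↔ v = x₂ ∧ a = x₁ := by
  by_cases hv : v = x₂
  · simp [hv, glueRight_self, eq_comm]
  · simp [hv, glueRight_of_ne hv]

lemma glueRight_eq_inr_iff {v : V₂} {w : {v : V₂ // v ≠ x₂}} :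
    glueRight x₁ x₂ v = Sum.inr w ↔ v = w := by
  by_cases hv : v = x₂
  · simp [hv, glueRight_self, w.2.symm]
  · simp [glueRight_of_ne hv, Subtype.ext_iff]

lemma isWedge_glue : IsWedge Function.Embedding.inl (glueRight x₁ x₂) x₁ x₂ := by
  refine ⟨glueRight_self.symm, ?_, fun hab => (glueRight_eq_inl_iff.mp hab.symm).2⟩
  rintro (a | ⟨v, hv⟩)
  · exact Or.inl ⟨a, rfl⟩
  · exact Or.inr ⟨v, glueRight_of_ne hv⟩

lemma glue_eq_sup_map (G₁ : SimpleGraph V₁) (G₂ : SimpleGraph V₂) :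
    glue G₁ G₂ x₁ x₂ = G₁.map Function.Embedding.inl ⊔ G₂.map (glueRight x₁ x₂) := by
  ext u v
  rcases u with a | ⟨b, hb⟩ <;> rcases v with c | ⟨d, hd⟩ <;>
    simp [glue, map_adj, glueRight_eq_inl_iff, glueRight_eq_inr_iff] <;>
    grind [adj_comm, Adj.ne]

end Glue

theorem stmt_2 {V1 V2 : Type*} [Fintype V1] [Fintype V2]
    (G1 : SimpleGraph V1) (G2 : SimpleGraph V2) (x1 : V1) (x2 : V2)
    (hc1 : G1.Connected) (hc2 : G2.Connected)
    (h1 : 2 ≤ Fintype.card V1) (h2 : 2 ≤ Fintype.card V2)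
    (hx1 : ndeg G1 x1 = 1) (hx2 : ndeg G2 x2 = 1) :
    maxLeaves (glue G1 G2 x1 x2) + 2 = maxLeaves G1 + maxLeaves G2 := by
  have := Fintype.one_lt_card_iff_nontrivial.mp h1
  have := Fintype.one_lt_card_iff_nontrivial.mp h2
  rw [glue_eq_sup_map]
  exact isWedge_glue.maxLeaves_sup_map_add_two hc1 hc2 hx1 hx2
end

section
/- Let g ≥ 3 and k ≥ 1 be integers. Let B be the graph consisting of a cycle of length g where to each cycle vertex a path of k+1 new vertices is attached by an edge. Then B has g(k+2) vertices, girth g, and the maximum number of leaves in a spanning tree of B is exactly g. -/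
open SimpleGraph

/-- A cycle of length `g` (the vertices `(i, 0)`), with a spine (path) of `k+1`
vertices `(i, 1), …, (i, k+1)` attached to each cycle vertex `(i, 0)`. -/
def cycleWithSpines (g k : ℕ) : SimpleGraph (Fin g × Fin (k + 2)) :=
  SimpleGraph.fromRel (fun a b =>
    ((a.2 : ℕ) = 0 ∧ (b.2 : ℕ) = 0 ∧ (b.1 : ℕ) = ((a.1 : ℕ) + 1) % g) ∨
    (a.1 = b.1 ∧ (b.2 : ℕ) = (a.2 : ℕ) + 1))


/-!
Every spine edge is a bridge. Hence a spanning tree contains all spine edges and a cycle contains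
none, so a cycle only passes through base vertices `(i, 0)`. Each of them has its two neighbours
on the cycle among `(i ± 1, 0)`, so the cycle visits all `g` base vertices and nothing else:
every cycle has length exactly `g`. One exists, because deleting a base edge leaves the
graph connected.

In a spanning tree `T` every base vertex has a base neighbour, as otherwise its spine would be a
whole component of `T`. With the spine edges this gives every vertex other than the spine ends
`(i, k + 1)` degree at least two, so `T` has exactly `g` leaves.
-/

open scoped Fin.CommRing

lemma SimpleGraph.Reachable.mem_of_forall_adj_mem {V : Type*} {G : SimpleGraph V} {S : Set V}
    (hS : ∀ ⦃x y⦄, G.Adj x y → x ∈ S → y ∈ S) {u v : V} (h : G.Reachable u v) (hu : u ∈ S) :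
    v ∈ S := by
  obtain ⟨p⟩ := h
  induction p with
  | nil => exact hu
  | cons hadj _ ih => exact ih (hS hadj hu)

lemma ndeg_eq_one_iff {V : Type*} {G : SimpleGraph V} {v : V} :
    ndeg G v = 1 ↔ ∃ w, G.neighborSet v = {w} := by
  rw [ndeg, Nat.card_coe_set_eq, Set.ncard_eq_one]

namespace Fin

variable {g : ℕ} [NeZero g]

lemma add_one_ne_self_of_two_le (hg : 2 ≤ g) (x : Fin g) : x + 1 ≠ x := by
  refine add_ne_left.2 fun h => ?_
  simp [Fin.ext_iff, Nat.mod_eq_of_lt hg] at h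

lemma val_eq_val_add_one_mod_iff {x y : Fin g} :
    (y : ℕ) = ((x : ℕ) + 1) % g ↔ y = x + 1 := by
  rw [Fin.ext_iff, Fin.val_add, Fin.val_one', Nat.add_mod_mod]

end Fin

namespace cycleWithSpines

variable {g k : ℕ}

lemma adj_iff [NeZero g] (hg : 2 ≤ g) {a b : Fin g × Fin (k + 2)} :
    (cycleWithSpines g k).Adj a b ↔
      (a.1 = b.1 ∧ ((b.2 : ℕ) = a.2 + 1 ∨ (a.2 : ℕ) = b.2 + 1)) ∨
      (a.2 = 0 ∧ b.2 = 0 ∧ (b.1 = a.1 + 1 ∨ a.1 = b.1 + 1)) := by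
  have := Fin.add_one_ne_self_of_two_le hg
  rw [cycleWithSpines, fromRel_adj]
  simp only [Fin.val_eq_val_add_one_mod_iff, ← Fin.val_eq_zero_iff]
  grind

lemma adj_spine (m : Fin g) (j : Fin (k + 1)) :
    (cycleWithSpines g k).Adj (m, j.castSucc) (m, j.succ) := by
  rw [cycleWithSpines, fromRel_adj]
  exact ⟨by simp [Fin.ext_iff], Or.inl (Or.inr ⟨rfl, by simp⟩)⟩

lemma adj_cycle [NeZero g] (hg : 2 ≤ g) (x : Fin g) :
    (cycleWithSpines g k).Adj (x, 0) (x + 1, 0) :=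
  (adj_iff hg).2 (Or.inr ⟨rfl, rfl, Or.inl rfl⟩)

lemma not_reachable_of_not_adj_spine [NeZero g] (hg : 2 ≤ g) {G : SimpleGraph (Fin g × Fin (k + 2))}
    (hle : G ≤ cycleWithSpines g k) {a b : Fin g × Fin (k + 2)} (hab : a.1 = b.1)
    (hb : (b.2 : ℕ) = a.2 + 1) (hG : ¬ G.Adj a b) : ¬ G.Reachable a b := by
  intro hr
  -- no edge of `G` leaves the part of the spine above the missing edge
  have hS := hr.symm.mem_of_forall_adj_mem (S := {v | v.1 = a.1 ∧ (a.2 : ℕ) < v.2}) ?_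
    ⟨hab.symm, by omega⟩
  · exact lt_irrefl _ hS.2
  rintro x y hxy ⟨hx1, hx2⟩
  rcases (adj_iff hg).1 (hle hxy) with ⟨h1, h2 | h2⟩ | ⟨h1, -, -⟩
  · exact ⟨h1 ▸ hx1, by omega⟩
  · refine ⟨h1 ▸ hx1, lt_of_le_of_ne (by omega) fun h => hG ?_⟩
    have hy : y = a := Prod.ext (h1 ▸ hx1) (Fin.ext h.symm)
    have hx : x = b := Prod.ext (hx1.trans hab) (Fin.ext (by omega))
    exact hx ▸ hy ▸ hxy.symm
  · simp [h1] at hx2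

lemma isBridge_spine [NeZero g] (hg : 2 ≤ g) {a b : Fin g × Fin (k + 2)} (hab : a.1 = b.1)
    (hb : (b.2 : ℕ) = a.2 + 1) : (cycleWithSpines g k).IsBridge s(a, b) :=
  isBridge_iff.2 <| not_reachable_of_not_adj_spine hg (deleteEdges_le _) hab hb (by simp)

lemma toSubgraph_adj_of_isCycle [NeZero g] (hg : 2 ≤ g) {u : Fin g × Fin (k + 2)}
    {p : (cycleWithSpines g k).Walk u u} (hp : p.IsCycle) {v w : Fin g × Fin (k + 2)}
    (h : p.toSubgraph.Adj v w) : v.2 = 0 ∧ w.2 = 0 ∧ (w.1 = v.1 + 1 ∨ w.1 = v.1 - 1) := by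
  have hvw := Walk.adj_toSubgraph_iff_mem_edges.1 h
  rcases (adj_iff hg).1 (p.toSubgraph.adj_sub h) with ⟨h1, h2 | h2⟩ | ⟨hv, hw, h1 | h1⟩
  · exact absurd hvw ((isBridge_spine hg h1 h2).notMem_edges_of_isCycle hp)
  · rw [Sym2.eq_swap] at hvw
    exact absurd hvw ((isBridge_spine hg h1.symm h2).notMem_edges_of_isCycle hp)
  · exact ⟨hv, hw, Or.inl h1⟩
  · exact ⟨hv, hw, Or.inr (eq_sub_of_add_eq h1.symm)⟩

lemma succ_mem_support_of_isCycle [NeZero g] (hg : 2 ≤ g) {u : Fin g × Fin (k + 2)}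
    {p : (cycleWithSpines g k).Walk u u} (hp : p.IsCycle) {v : Fin g × Fin (k + 2)}
    (hv : v ∈ p.support) : v.2 = 0 ∧ (v.1 + 1, 0) ∈ p.support := by
  set N := p.toSubgraph.neighborSet v
  have hN : N.ncard = 2 := hp.ncard_neighborSet_toSubgraph_eq_two hv
  obtain ⟨w, hw⟩ := Set.nonempty_of_ncard_ne_zero (s := N) (by omega)
  refine ⟨(toSubgraph_adj_of_isCycle hg hp hw).1, ?_⟩
  by_contra hsucc
  have hsub : N ⊆ {(v.1 - 1, 0)} := by
    intro x hx
    obtain ⟨-, hx2, hx1 | hx1⟩ := toSubgraph_adj_of_isCycle hg hp hx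
    · obtain rfl : x = (v.1 + 1, 0) := Prod.ext hx1 hx2
      exact absurd (Walk.mem_support_of_adj_toSubgraph hx.symm) hsucc
    · exact Prod.ext hx1 hx2
  have := Set.ncard_le_ncard hsub (Set.finite_singleton _)
  rw [Set.ncard_singleton] at this
  omega

lemma mem_support_of_isCycle [NeZero g] (hg : 2 ≤ g) {u : Fin g × Fin (k + 2)}
    {p : (cycleWithSpines g k).Walk u u} (hp : p.IsCycle) (m : Fin g) : (m, 0) ∈ p.support := by
  have hsucc : ∀ t : ℕ, (u.1 + t, 0) ∈ p.support := by
    intro t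
    induction t with
    | zero =>
      have hu := (succ_mem_support_of_isCycle hg hp p.start_mem_support).1
      rw [Nat.cast_zero, add_zero, ← hu]
      exact p.start_mem_support
    | succ t ih => simpa [← add_assoc] using (succ_mem_support_of_isCycle hg hp ih).2
  simpa using hsucc (m - u.1).val

lemma length_eq_of_isCycle [NeZero g] (hg : 2 ≤ g) {u : Fin g × Fin (k + 2)}
    {p : (cycleWithSpines g k).Walk u u} (hp : p.IsCycle) : p.length = g := by
  classical
  have htail : p.support.tail.toFinset = Finset.univ.image (·, (0 : Fin (k + 2))) := by
    ext v
    simp only [List.mem_toFinset, Finset.mem_image, Finset.mem_univ, true_and]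
    constructor
    · intro hv
      exact ⟨v.1, Prod.ext rfl
        (succ_mem_support_of_isCycle hg hp (List.mem_of_mem_tail hv)).1.symm⟩
    · rintro ⟨m, rfl⟩
      rcases (p.mem_support_iff).1 (mem_support_of_isCycle hg hp m) with h | h
      · exact h ▸ Walk.end_mem_tail_support hp.not_nil
      · exact h
  calc p.length = p.support.tail.length := by simp [Walk.length_support]
    _ = g := by
      rw [← List.toFinset_card_of_nodup hp.support_nodup, htail,
        Finset.card_image_of_injective _ (Prod.mk_left_injective _), Finset.card_univ,
        Fintype.card_fin]

lemma reachable_natCast_of_adj [NeZero g] {G : SimpleGraph (Fin g × Fin (k + 2))}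
    (hcyc : ∀ t : ℕ, t + 1 < g → G.Adj ((t : Fin g), 0) (((t + 1 : ℕ) : Fin g), 0)) {t : ℕ}
    (ht : t < g) : G.Reachable (0, 0) ((t : Fin g), 0) := by
  induction t with
  | zero => simp
  | succ t ih => exact (ih (by omega)).trans (hcyc t ht).reachable

lemma connected_of_adj [NeZero g] {G : SimpleGraph (Fin g × Fin (k + 2))}
    (hcyc : ∀ t : ℕ, t + 1 < g → G.Adj ((t : Fin g), 0) (((t + 1 : ℕ) : Fin g), 0))
    (hspine : ∀ (m : Fin g) (j : Fin (k + 1)), G.Adj (m, j.castSucc) (m, j.succ)) :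
    G.Connected := by
  refine (connected_iff_exists_forall_reachable G).2 ⟨(0, 0), fun ⟨m, j⟩ => ?_⟩
  have hm : G.Reachable (0, 0) (m, 0) := by
    simpa using reachable_natCast_of_adj hcyc m.isLt
  induction j using Fin.induction with
  | zero => exact hm
  | succ j ih => exact ih.trans (hspine m j).reachable

lemma connected [NeZero g] : (cycleWithSpines g k).Connected :=
  connected_of_adj (fun t ht => by simpa using adj_cycle (by omega) (t : Fin g)) adj_spine

lemma connected_deleteEdges [NeZero g] (hg : 3 ≤ g) :
    ((cycleWithSpines g k).deleteEdges {s((((g - 1 : ℕ) : Fin g), 0), (0, 0))}).Connected := by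
  refine connected_of_adj (fun t ht => ?_) (fun m j => ?_)
  · refine deleteEdges_adj.2 ⟨by simpa using adj_cycle (by omega) (t : Fin g), ?_⟩
    simp only [Set.mem_singleton_iff, Sym2.eq_iff, Prod.mk.injEq, and_true, Fin.ext_iff,
      Fin.val_natCast, Fin.val_zero]
    rw [Nat.mod_eq_of_lt ht, Nat.mod_eq_of_lt (by omega : t < g),
      Nat.mod_eq_of_lt (by omega : g - 1 < g)]
    omega
  · refine deleteEdges_adj.2 ⟨adj_spine m j, ?_⟩
    simp [Fin.succ_ne_zero]

lemma not_isAcyclic [NeZero g] (hg : 3 ≤ g) : ¬ (cycleWithSpines g k).IsAcyclic := by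
  have hadj : (cycleWithSpines g k).Adj (((g - 1 : ℕ) : Fin g), 0) (0, 0) := by
    simpa [← Nat.cast_succ, Nat.sub_add_cancel (by omega : 1 ≤ g)] using
      adj_cycle (k := k) (by omega) ((g - 1 : ℕ) : Fin g)
  rw [isAcyclic_iff_forall_adj_isBridge]
  exact fun h => h hadj ((connected_deleteEdges hg).preconnected _ _)

lemma girth_eq (hg : 3 ≤ g) : (cycleWithSpines g k).girth = g := by
  have : NeZero g := ⟨by omega⟩
  obtain ⟨u, p, hp, hlen⟩ := exists_girth_eq_length.2 (not_isAcyclic hg)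
  rw [hlen, length_eq_of_isCycle (by omega) hp]

section spanningTree

variable [NeZero g] {T : SimpleGraph (Fin g × Fin (k + 2))}

lemma adj_of_isSpanningTreeOf (hg : 2 ≤ g) (hT : IsSpanningTreeOf T (cycleWithSpines g k))
    {a b : Fin g × Fin (k + 2)} (hab : a.1 = b.1) (hb : (b.2 : ℕ) = a.2 + 1) : T.Adj a b :=
  by_contra fun h =>
    not_reachable_of_not_adj_spine hg hT.1 hab hb h (hT.2.connected.preconnected a b)

lemma exists_adj_of_isSpanningTreeOf (hg : 2 ≤ g) (hT : IsSpanningTreeOf T (cycleWithSpines g k))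
    (m : Fin g) : ∃ x, T.Adj (m, 0) (x, 0) := by
  by_contra! h
  have hS := (hT.2.connected.preconnected (m, 0) (m + 1, 0)).mem_of_forall_adj_mem
    (S := {v | v.1 = m}) ?_ (Set.mem_ofPred.2 rfl)
  · exact Fin.add_one_ne_self_of_two_le hg m hS
  rintro ⟨x1, x2⟩ ⟨y1, y2⟩ hxy (rfl : x1 = m)
  rcases (adj_iff hg).1 (hT.1 hxy) with ⟨h1, -⟩ | ⟨h1, h2, -⟩
  · exact h1.symm
  · obtain rfl : x2 = 0 := h1
    obtain rfl : y2 = 0 := h2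
    exact absurd hxy (h y1)

lemma neighborSet_last_of_isSpanningTreeOf (hg : 2 ≤ g)
    (hT : IsSpanningTreeOf T (cycleWithSpines g k)) (m : Fin g) :
    T.neighborSet (m, Fin.last (k + 1)) = {(m, (Fin.last k).castSucc)} := by
  ext w
  refine ⟨fun hw => ?_, ?_⟩
  · rcases (adj_iff hg).1 (hT.1 hw) with ⟨h1, h2 | h2⟩ | ⟨h1, -, -⟩
    · simp at h2
      omega
    · exact Prod.ext h1.symm (Fin.ext (by simp at h2 ⊢; omega))
    · simp [Fin.ext_iff] at h1
  · rintro rfl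
    have htop : T.Adj (m, (Fin.last k).castSucc) (m, Fin.last (k + 1)) :=
      adj_of_isSpanningTreeOf hg hT rfl rfl
    exact htop.symm

lemma exists_adj_ne_of_isSpanningTreeOf (hg : 2 ≤ g)
    (hT : IsSpanningTreeOf T (cycleWithSpines g k)) {m : Fin g} {j : Fin (k + 2)}
    (hj : j ≠ Fin.last (k + 1)) : ∃ x y, x ≠ y ∧ T.Adj (m, j) x ∧ T.Adj (m, j) y := by
  have hj' := Fin.val_lt_last hj
  have hup : T.Adj (m, j) (m, ⟨j + 1, by omega⟩) := adj_of_isSpanningTreeOf hg hT rfl rfl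
  by_cases h0 : j = 0
  · obtain ⟨x, hx⟩ := exists_adj_of_isSpanningTreeOf hg hT m
    exact ⟨_, _, by simp [h0, Fin.ext_iff], hup, h0 ▸ hx⟩
  · have hj0 : (j : ℕ) ≠ 0 := Fin.val_ne_iff.2 h0
    have hdown : T.Adj (m, ⟨j - 1, by omega⟩) (m, j) :=
      adj_of_isSpanningTreeOf hg hT rfl (by simp; omega)
    exact ⟨_, _, by simp [Fin.ext_iff]; omega, hup, hdown.symm⟩

lemma ndeg_eq_one_iff_of_isSpanningTreeOf (hg : 2 ≤ g)
    (hT : IsSpanningTreeOf T (cycleWithSpines g k)) (v : Fin g × Fin (k + 2)) :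
    ndeg T v = 1 ↔ v.2 = Fin.last (k + 1) := by
  obtain ⟨m, j⟩ := v
  change _ ↔ j = _
  rw [ndeg_eq_one_iff]
  refine ⟨fun ⟨w, hw⟩ => ?_, ?_⟩
  · by_contra hj
    obtain ⟨x, y, hxy, hx, hy⟩ := exists_adj_ne_of_isSpanningTreeOf hg hT hj
    have hx' : x ∈ T.neighborSet (m, j) := hx
    have hy' : y ∈ T.neighborSet (m, j) := hy
    rw [hw, Set.mem_singleton_iff] at hx' hy'
    exact hxy (hx'.trans hy'.symm)
  · rintro rfl
    exact ⟨_, neighborSet_last_of_isSpanningTreeOf hg hT m⟩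

lemma numLeaves_eq_of_isSpanningTreeOf (hg : 2 ≤ g)
    (hT : IsSpanningTreeOf T (cycleWithSpines g k)) : numLeaves T = g := by
  have hleaves : {v | ndeg T v = 1} = Set.range (·, Fin.last (k + 1)) := by
    ext ⟨m, j⟩
    simp [ndeg_eq_one_iff_of_isSpanningTreeOf hg hT, eq_comm]
  rw [numLeaves, hleaves, Nat.card_range_of_injective (Prod.mk_left_injective _), Nat.card_fin]

end spanningTree

lemma maxLeaves_eq (hg : 2 ≤ g) : maxLeaves (cycleWithSpines g k) = g := by
  have : NeZero g := ⟨by omega⟩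
  obtain ⟨T, hT⟩ : ∃ T, IsSpanningTreeOf T (cycleWithSpines g k) :=
    connected.exists_isTree_le
  have hleaves : {n | ∃ T, IsSpanningTreeOf T (cycleWithSpines g k) ∧ numLeaves T = n} = {g} :=
    Set.eq_singleton_iff_unique_mem.2 ⟨⟨T, hT, numLeaves_eq_of_isSpanningTreeOf hg hT⟩,
      fun _ ⟨_, hT', hn⟩ => hn ▸ numLeaves_eq_of_isSpanningTreeOf hg hT'⟩
  rw [maxLeaves, hleaves, csSup_singleton]

end cycleWithSpines

theorem stmt_13_general (g k : ℕ) (hg : 3 ≤ g) :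
    Fintype.card (Fin g × Fin (k + 2)) = g * (k + 2) ∧
    (cycleWithSpines g k).girth = (g : ℕ∞) ∧
    maxLeaves (cycleWithSpines g k) = g :=
  ⟨by simp, by rw [cycleWithSpines.girth_eq hg], cycleWithSpines.maxLeaves_eq (by omega)⟩

theorem stmt_13 (g k : ℕ) (hg : 3 ≤ g) (hk : 1 ≤ k) :
    Fintype.card (Fin g × Fin (k + 2)) = g * (k + 2) ∧
    (cycleWithSpines g k).girth = (g : ℕ∞) ∧
    maxLeaves (cycleWithSpines g k) = g :=
  stmt_13_general g k hg
end
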